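/- arXiv:1605.01305 — 7 statements merged into one kernel-verified Lean document; each statement's English description precedes it below -/
import Mathlib

section
/- Let A be a PID with fraction field F ≠ A, let K/F be a field extension of finite degree N ≥ 2, and let S be an A-order in K with A-basis 1 = α₁, α₂, …, α_N. Let x be a nonzero nonunit of A and let p be a prime element of A dividing x. Set R = A + xS. Then 𝔭 = pA + xS is a maximal ideal of R with R/𝔭 ≅ A/(p), and 𝔭/𝔭² is a free A/(p)-module of rank N; in particular dim_{R/𝔭} 𝔭/𝔭² = N. -/
/-!
With respect to the basis `α` of `S` (where `α i₀ = 1`), an element of `R` is `a + x s`, whose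
`α`-coordinates are `a + x sᵢ₀` and `x sⱼ` (`j ≠ i₀`); so `a ∈ A` lies in `𝔭 = pA + xS` iff
`p ∣ a`, which gives `R/𝔭 ≅ A/(p)`, and `𝔭` has the `A`-basis `p`, `x α j` (`j ≠ i₀`).
Since `p ∣ x` we have `𝔭² ⊆ p𝔭`, so an `A`-combination of this basis lying in `𝔭²` has all
coefficients in `pA ⊆ 𝔭`. As `A → R/𝔭` is onto, the basis therefore reduces to an
`R/𝔭`-basis of `𝔭/𝔭²`.
-/

namespace Ideal

variable {A R ι : Type*} [CommRing A] [CommRing R] [Algebra A R] [Fintype ι] {I : Ideal R}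
  {g : ι → I}

theorem toCotangent_smul_of_tower (c : A) (m : I) :
    I.toCotangent (c • m) = Quotient.mk I (algebraMap A R c) • I.toCotangent m := by
  rw [← algebraMap_smul R c m, map_smul]
  rfl

theorem span_range_toCotangent_eq_top (hg : Submodule.span A (Set.range g) = ⊤) :
    Submodule.span (R ⧸ I) (Set.range (I.toCotangent ∘ g)) = ⊤ := by
  refine top_unique fun v _ => ?_
  obtain ⟨m, rfl⟩ := I.toCotangent_surjective v
  obtain ⟨c, rfl⟩ := (Submodule.mem_span_range_iff_exists_fun A).1 (hg ▸ Submodule.mem_top (x := m))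
  simp only [map_sum, toCotangent_smul_of_tower]
  exact Submodule.sum_mem _ fun j _ => Submodule.smul_mem _ _ (Submodule.subset_span ⟨j, rfl⟩)

theorem linearIndependent_toCotangent
    (hsurj : Function.Surjective ((Quotient.mk I).comp (algebraMap A R)))
    (hg : ∀ c : ι → A, ((∑ j, c j • g j : I) : R) ∈ I ^ 2 → ∀ j, algebraMap A R (c j) ∈ I) :
    LinearIndependent (R ⧸ I) (I.toCotangent ∘ g) := by
  rw [Fintype.linearIndependent_iff]
  intro r hr j
  choose c hc using fun j => hsurj (r j)
  have hsq : ((∑ j, c j • g j : I) : R) ∈ I ^ 2 := by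
    rw [← toCotangent_eq_zero, ← hr, map_sum]
    simp only [toCotangent_smul_of_tower, Function.comp_apply]
    exact Finset.sum_congr rfl fun j _ => by rw [← hc j]; rfl
  rw [← hc j]
  exact Quotient.eq_zero_iff_mem.2 (hg c hsq j)

theorem finrank_cotangent_eq_card [Nontrivial (R ⧸ I)]
    (hsurj : Function.Surjective ((Quotient.mk I).comp (algebraMap A R)))
    (hspan : Submodule.span A (Set.range g) = ⊤)
    (hg : ∀ c : ι → A, ((∑ j, c j • g j : I) : R) ∈ I ^ 2 → ∀ j, algebraMap A R (c j) ∈ I) :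
    Module.finrank (R ⧸ I) I.Cotangent = Fintype.card ι :=
  Module.finrank_eq_card_basis <|
    .mk (linearIndependent_toCotangent hsurj hg) (span_range_toCotangent_eq_top hspan).ge

end Ideal

section APlusXS

variable {A K ι : Type*} [CommRing A] [CommRing K] [Algebra A K] {S R : Subalgebra A K}
  {α : Module.Basis ι A S} {i₀ : ι} {x p : A} {𝔭 : Ideal R}

/-- `R = A + xS`. -/
def IsAPlusXS (S : Subalgebra A K) (x : A) (R : Subalgebra A K) : Prop :=
  ∀ r : K, r ∈ R ↔ ∃ a : A, ∃ s ∈ S, r = algebraMap A K a + algebraMap A K x * s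

/-- `𝔭 = pA + xS`. -/
def IsPAPlusXS (S : Subalgebra A K) (x p : A) (𝔭 : Ideal R) : Prop :=
  ∀ r : R, r ∈ 𝔭 ↔ ∃ a : A, ∃ s ∈ S, (r : K) = algebraMap A K (p * a) + algebraMap A K x * s

/-- The `A`-basis `p = p • α i₀`, `x • α j` (`j ≠ i₀`) of `pA + xS` is `weight i₀ p x • α`. -/
def weight [DecidableEq ι] (i₀ : ι) (p x : A) : ι → A := Function.update (fun _ => x) i₀ p

theorem weight_dvd [DecidableEq ι] (hpx : p ∣ x) (j : ι) : weight i₀ p x j ∣ x := by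
  unfold weight
  rcases eq_or_ne j i₀ with rfl | hj
  · simpa using hpx
  · simp [hj]

theorem weight_ne_zero [DecidableEq ι] (hx : x ≠ 0) (hpx : p ∣ x) (j : ι) :
    weight i₀ p x j ≠ 0 :=
  fun h => hx (zero_dvd_iff.1 (h ▸ weight_dvd hpx j))

theorem IsAPlusXS.le (hR : IsAPlusXS S x R) : R ≤ S := fun r hr => by
  obtain ⟨a, s, hs, rfl⟩ := (hR r).1 hr
  exact add_mem (S.algebraMap_mem a) (mul_mem (S.algebraMap_mem x) hs)

theorem repr_inclusion_algebraMap [DecidableEq ι] (hα : (α i₀ : K) = 1) (hRS : R ≤ S) (a : A) :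
    α.repr (Subalgebra.inclusion hRS (algebraMap A R a)) = Finsupp.single i₀ a := by
  have : α i₀ = 1 := Subtype.ext hα
  rw [AlgHom.commutes, Algebra.algebraMap_eq_smul_one, ← this, map_smul, α.repr_self,
    Finsupp.smul_single_one]

theorem repr_inclusion_eq [DecidableEq ι] (hα : (α i₀ : K) = 1) (hRS : R ≤ S) {t : R} {a : A}
    {s : S} (ht : (t : K) = algebraMap A K a + algebraMap A K x * s) :
    α.repr (Subalgebra.inclusion hRS t) = Finsupp.single i₀ a + x • α.repr s := by
  have : Subalgebra.inclusion hRS t = a • α i₀ + x • s := by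
    ext
    simp [Algebra.smul_def, hα, ht]
  rw [this, map_add, map_smul, map_smul, α.repr_self, Finsupp.smul_single_one]

namespace IsPAPlusXS

theorem surjective_mk_comp_algebraMap (h𝔭 : IsPAPlusXS S x p 𝔭) (hR : IsAPlusXS S x R) :
    Function.Surjective ((Ideal.Quotient.mk 𝔭).comp (algebraMap A R)) := by
  intro m
  obtain ⟨r, rfl⟩ := Ideal.Quotient.mk_surjective m
  obtain ⟨a, s, hs, hr⟩ := (hR r).1 r.2
  refine ⟨a, Ideal.Quotient.eq.2 <| (h𝔭 _).2 ⟨0, -s, neg_mem hs, ?_⟩⟩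
  simp [hr]

theorem algebraMap_mem_iff [DecidableEq ι] (h𝔭 : IsPAPlusXS S x p 𝔭) (hα : (α i₀ : K) = 1)
    (hRS : R ≤ S) (hpx : p ∣ x) (a : A) : algebraMap A R a ∈ 𝔭 ↔ p ∣ a := by
  refine ⟨fun ha => ?_, fun ⟨b, hb⟩ => (h𝔭 _).2 ⟨b, 0, zero_mem S, by simp [hb]⟩⟩
  obtain ⟨b, s, hs, h⟩ := (h𝔭 _).1 ha
  have hrepr := congrArg (· i₀) <|
    (repr_inclusion_algebraMap hα hRS a).symm.trans (repr_inclusion_eq hα hRS (s := ⟨s, hs⟩) h)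
  have ha : a = p * b + x * α.repr ⟨s, hs⟩ i₀ := by simpa using hrepr
  exact ha ▸ dvd_add (dvd_mul_right _ _) (hpx.mul_right _)

theorem ker_mk_comp_algebraMap [DecidableEq ι] (h𝔭 : IsPAPlusXS S x p 𝔭)
    (hα : (α i₀ : K) = 1) (hRS : R ≤ S) (hpx : p ∣ x) :
    RingHom.ker ((Ideal.Quotient.mk 𝔭).comp (algebraMap A R)) = Ideal.span {p} := by
  ext a
  rw [RingHom.mem_ker, RingHom.comp_apply, Ideal.Quotient.eq_zero_iff_mem,
    h𝔭.algebraMap_mem_iff hα hRS hpx, Ideal.mem_span_singleton]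

theorem sq_le_span_mul (h𝔭 : IsPAPlusXS S x p 𝔭) (hR : IsAPlusXS S x R) (hpx : p ∣ x) :
    𝔭 ^ 2 ≤ Ideal.span {algebraMap A R p} * 𝔭 := by
  obtain ⟨y, rfl⟩ := hpx
  rw [sq, Ideal.mul_le]
  intro r₁ h₁ r₂ h₂
  obtain ⟨a₁, s₁, hs₁, e₁⟩ := (h𝔭 r₁).1 h₁
  obtain ⟨a₂, s₂, hs₂, e₂⟩ := (h𝔭 r₂).1 h₂
  have hs : s₁ * (algebraMap A K a₂ + algebraMap A K y * s₂) ∈ S :=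
    mul_mem hs₁ (add_mem (S.algebraMap_mem a₂) (mul_mem (S.algebraMap_mem y) hs₂))
  -- `x s₁ r₂ = p w` with `w = x s₁ (a₂ + y s₂) ∈ xS ⊆ 𝔭`
  let w : R := ⟨_, (hR _).2 ⟨0, _, hs, rfl⟩⟩
  have hw : w ∈ 𝔭 := (h𝔭 w).2 ⟨0, _, hs, by simp [w]⟩
  refine Ideal.mem_span_singleton_mul.2 ⟨a₁ • r₂ + w, add_mem (𝔭.smul_of_tower_mem a₁ h₂) hw, ?_⟩
  apply Subtype.ext
  simp only [Subalgebra.coe_mul, Subalgebra.coe_add, Subalgebra.coe_algebraMap,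
    Algebra.smul_def, w, e₁, e₂, map_mul, map_zero, zero_add]
  ring

theorem weight_dvd_repr [DecidableEq ι] (h𝔭 : IsPAPlusXS S x p 𝔭) (hα : (α i₀ : K) = 1)
    (hRS : R ≤ S) (hpx : p ∣ x) {t : R} (ht : t ∈ 𝔭) (j : ι) :
    weight i₀ p x j ∣ α.repr (Subalgebra.inclusion hRS t) j := by
  obtain ⟨a, s, hs, h⟩ := (h𝔭 t).1 ht
  rw [repr_inclusion_eq hα hRS (s := ⟨s, hs⟩) h, Finsupp.add_apply, Finsupp.smul_apply,
    smul_eq_mul]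
  refine dvd_add ?_ ((weight_dvd hpx j).mul_right _)
  rcases eq_or_ne j i₀ with rfl | hj
  · simp [weight]
  · simp [hj.symm]

theorem exists_weight_mul_eq [DecidableEq ι] (hα : (α i₀ : K) = 1) (j : ι) :
    ∃ a : A, ∃ s ∈ S,
      algebraMap A K (weight i₀ p x j) * α j = algebraMap A K (p * a) + algebraMap A K x * s := by
  rcases eq_or_ne j i₀ with rfl | hj
  · exact ⟨1, 0, zero_mem S, by simp [weight, hα]⟩
  · exact ⟨0, α j, (α j).2, by simp [weight, hj]⟩

noncomputable def gen [DecidableEq ι] (h𝔭 : IsPAPlusXS S x p 𝔭) (hR : IsAPlusXS S x R)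
    (hα : (α i₀ : K) = 1) (j : ι) : 𝔭 :=
  have h := exists_weight_mul_eq (p := p) (x := x) hα j
  ⟨⟨_, (hR _).2 (let ⟨a, s, hs, e⟩ := h; ⟨p * a, s, hs, e⟩)⟩, (h𝔭 _).2 h⟩

variable [DecidableEq ι] (h𝔭 : IsPAPlusXS S x p 𝔭) (hR : IsAPlusXS S x R)
  (hα : (α i₀ : K) = 1)

theorem inclusion_gen (j : ι) :
    Subalgebra.inclusion hR.le (h𝔭.gen hR hα j : R) = weight i₀ p x j • α j :=
  Subtype.ext (by simp [gen, Algebra.smul_def])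

theorem repr_inclusion_sum_smul_gen [Fintype ι] (c : ι → A) (j : ι) :
    α.repr (Subalgebra.inclusion hR.le ((∑ k, c k • h𝔭.gen hR hα k : 𝔭) : R)) j =
      c j * weight i₀ p x j := by
  simp [h𝔭.inclusion_gen hR hα, Finsupp.single_apply]

theorem span_range_gen [Fintype ι] (hpx : p ∣ x) :
    Submodule.span A (Set.range (h𝔭.gen hR hα)) = ⊤ := by
  refine Submodule.eq_top_iff'.2 fun t => (Submodule.mem_span_range_iff_exists_fun A).2 ?_
  choose e he using h𝔭.weight_dvd_repr hα hR.le hpx t.2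
  refine ⟨e, Subtype.ext <| Subalgebra.inclusion_injective hR.le <| α.repr.injective <|
    Finsupp.ext fun j => ?_⟩
  rw [repr_inclusion_sum_smul_gen, he j, mul_comm]

theorem algebraMap_mem_of_sum_smul_gen_mem_sq [IsDomain A] [Fintype ι] (hx : x ≠ 0) (hpx : p ∣ x)
    (c : ι → A) (hc : ((∑ j, c j • h𝔭.gen hR hα j : 𝔭) : R) ∈ 𝔭 ^ 2) (j : ι) :
    algebraMap A R (c j) ∈ 𝔭 := by
  obtain ⟨u, hu, hpu⟩ := Ideal.mem_span_singleton_mul.1 (h𝔭.sq_le_span_mul hR hpx hc)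
  obtain ⟨e, he⟩ := h𝔭.weight_dvd_repr hα hR.le hpx hu j
  have hcj : c j * weight i₀ p x j = p * (weight i₀ p x j * e) := by
    rw [← h𝔭.repr_inclusion_sum_smul_gen hR hα c j, ← hpu, ← he, ← Algebra.smul_def p u,
      map_smul, map_smul]
    rfl
  rw [h𝔭.algebraMap_mem_iff hα hR.le hpx]
  exact ⟨e, mul_right_cancel₀ (weight_ne_zero hx hpx j) (by linear_combination hcj)⟩

end IsPAPlusXS

end APlusXS

theorem order_A_plus_xS_cotangent (A K : Type*) [CommRing A] [IsDomain A]
    [IsPrincipalIdealRing A] [Field K] [Algebra A K]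
    (N : ℕ) (hN : 2 ≤ N)
    (S : Subalgebra A K) (α : Module.Basis (Fin N) A S) (hα : (α ⟨0, by omega⟩ : K) = 1)
    (x : A) (hx0 : x ≠ 0) (p : A) (hp : Prime p) (hpx : p ∣ x)
    (R : Subalgebra A K)
    (hR : ∀ r : K, r ∈ R ↔ ∃ a : A, ∃ s ∈ S, r = algebraMap A K a + algebraMap A K x * s)
    (𝔭 : Ideal R)
    (h𝔭 : ∀ r : R, r ∈ 𝔭 ↔ ∃ a : A, ∃ s ∈ S,
      (r : K) = algebraMap A K (p * a) + algebraMap A K x * s) :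
    𝔭.IsMaximal ∧ Nonempty ((R ⧸ 𝔭) ≃+* A ⧸ Ideal.span {p}) ∧
      Module.finrank (R ⧸ 𝔭) 𝔭.Cotangent = N := by
  have hR : IsAPlusXS S x R := hR
  have h𝔭 : IsPAPlusXS S x p 𝔭 := h𝔭
  have hsurj := h𝔭.surjective_mk_comp_algebraMap hR
  let e : (R ⧸ 𝔭) ≃+* A ⧸ Ideal.span {p} :=
    ((Ideal.quotEquivOfEq (h𝔭.ker_mk_comp_algebraMap hα hR.le hpx).symm).trans
      (RingHom.quotientKerEquivOfSurjective hsurj)).symm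
  have hpmax : (Ideal.span {p}).IsMaximal :=
    PrincipalIdealRing.isMaximal_of_irreducible hp.irreducible
  have hmax : 𝔭.IsMaximal := Ideal.Quotient.maximal_of_isField _ <|
    e.toMulEquiv.isField ((Ideal.Quotient.maximal_ideal_iff_isField_quotient _).1 hpmax)
  have : Nontrivial (R ⧸ 𝔭) := Ideal.Quotient.nontrivial_iff.2 hmax.ne_top
  refine ⟨hmax, ⟨e⟩, ?_⟩
  rw [Ideal.finrank_cotangent_eq_card hsurj (h𝔭.span_range_gen hR hα hpx)
    (h𝔭.algebraMap_mem_of_sum_smul_gen_mem_sq hR hα hx0 hpx), Fintype.card_fin]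
end

section
/- Let A be a PID, x ∈ A a nonzero nonunit, p a prime element of A dividing x, and S an A-order in a degree N field extension K of the fraction field F of A. Set R = A + xS and 𝔭 = pA + xS. If 𝔮 is any prime ideal of R with 𝔮 ∩ A = (p), then 𝔮 = 𝔭. -/
/-!
Write `x = p t`. For `s ∈ S` we have `(x s)² = p · x (t s²)` with `x (t s²) ∈ R`, so `x S ⊆ R` lies in
the radical of `pR`, hence in every prime `𝔮` of `R` containing `p`; this gives `𝔭 ≤ 𝔮`. Conversely,
an element `a + x s` of `𝔮` has `a ∈ 𝔮 ∩ A = (p)`, so it lies in `𝔭`.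
-/

section

variable {A K : Type*} [CommRing A] [CommRing K] [Algebra A K] {S R : Subalgebra A K} {x p : A}

theorem algebraMap_dvd_sq_of_coe_eq_mul (hpx : p ∣ x)
    (hxS : ∀ s ∈ S, algebraMap A K x * s ∈ R) {u : R} {s : K} (hs : s ∈ S)
    (hu : (u : K) = algebraMap A K x * s) : algebraMap A R p ∣ u ^ 2 := by
  obtain ⟨t, rfl⟩ := hpx
  have hts : algebraMap A K t * s ^ 2 ∈ S := S.mul_mem (S.algebraMap_mem t) (S.pow_mem hs 2)
  refine ⟨⟨_, hxS _ hts⟩, Subtype.ext ?_⟩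
  simp only [SubmonoidClass.coe_pow, Subalgebra.coe_mul, Subalgebra.coe_algebraMap, hu, map_mul]
  ring

theorem mem_of_coe_eq_mul {𝔮 : Ideal R} (h𝔮 : 𝔮.IsPrime) (hp𝔮 : algebraMap A R p ∈ 𝔮)
    (hpx : p ∣ x) (hxS : ∀ s ∈ S, algebraMap A K x * s ∈ R) {u : R} {s : K} (hs : s ∈ S)
    (hu : (u : K) = algebraMap A K x * s) : u ∈ 𝔮 :=
  h𝔮.mem_of_pow_mem 2 <|
    Ideal.mem_of_dvd _ (algebraMap_dvd_sq_of_coe_eq_mul hpx hxS hs hu) hp𝔮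

theorem mem_iff_algebraMap_mem_of_coe_eq_add {𝔮 : Ideal R} (h𝔮 : 𝔮.IsPrime)
    (hp𝔮 : algebraMap A R p ∈ 𝔮) (hpx : p ∣ x) (hxS : ∀ s ∈ S, algebraMap A K x * s ∈ R)
    {u : R} {a : A} {s : K} (hs : s ∈ S)
    (hu : (u : K) = algebraMap A K a + algebraMap A K x * s) :
    u ∈ 𝔮 ↔ algebraMap A R a ∈ 𝔮 := by
  have hrest : u - algebraMap A R a ∈ 𝔮 :=
    mem_of_coe_eq_mul h𝔮 hp𝔮 hpx hxS hs (by simp [hu])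
  exact ⟨fun h => by simpa using 𝔮.sub_mem h hrest, fun h => by simpa using 𝔮.add_mem hrest h⟩

end

/-- With `R = A + xS` and `𝔭 = pA + xS` as before, any prime ideal `𝔮` of `R` with
`𝔮 ∩ A = (p)` equals `𝔭`. -/
theorem order_A_plus_xS_unique_prime_over (A K : Type*) [CommRing A] [Field K] [Algebra A K]
    (S : Subalgebra A K) (x : A) (p : A) (hpx : p ∣ x) (R : Subalgebra A K)
    (hR : ∀ r : K, r ∈ R ↔ ∃ a : A, ∃ s ∈ S, r = algebraMap A K a + algebraMap A K x * s)
    (𝔭 : Ideal R)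
    (h𝔭 : ∀ r : R, r ∈ 𝔭 ↔ ∃ a : A, ∃ s ∈ S,
      (r : K) = algebraMap A K (p * a) + algebraMap A K x * s)
    (𝔮 : Ideal R) (h𝔮 : 𝔮.IsPrime)
    (hcomap : Ideal.comap (algebraMap A R) 𝔮 = Ideal.span {p}) :
    𝔮 = 𝔭 := by
  have hmem_comap {a : A} : algebraMap A R a ∈ 𝔮 ↔ p ∣ a := by
    rw [← Ideal.mem_comap, hcomap, Ideal.mem_span_singleton]
  have hxS (s : K) (hs : s ∈ S) : algebraMap A K x * s ∈ R :=
    (hR _).2 ⟨0, s, hs, by rw [map_zero, zero_add]⟩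
  have hsplit {u : R} {a : A} {s : K} (hs : s ∈ S)
      (hu : (u : K) = algebraMap A K a + algebraMap A K x * s) :=
    mem_iff_algebraMap_mem_of_coe_eq_add h𝔮 (hmem_comap.2 dvd_rfl) hpx hxS hs hu
  ext u
  constructor
  · intro hu
    obtain ⟨a, s, hs, hcoe⟩ := (hR u).1 u.2
    obtain ⟨b, rfl⟩ := hmem_comap.1 ((hsplit hs hcoe).1 hu)
    exact (h𝔭 u).2 ⟨b, s, hs, hcoe⟩
  · intro hu
    obtain ⟨a, s, hs, hcoe⟩ := (h𝔭 u).1 hu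
    exact (hsplit hs hcoe).2 (hmem_comap.2 (dvd_mul_right p a))
end

section
/- Let 𝔯 be a nonzero commutative ring. If the polynomial ring 𝔯[t] has the property that there is n ∈ ℕ with every ideal of 𝔯[t] generated by at most n elements, then 𝔯 is Artinian. -/
/-!
Bounded generation passes to quotient rings, so `𝔯 = 𝔯[t]/(t)` is Noetherian, and by
Hopkins–Levitzki it suffices that every prime `p` is maximal, i.e. that the domain `D = 𝔯/p`,
whose polynomial ring `D[t]` is a quotient of `𝔯[t]`, is a field.

If `a ∈ D` is a nonzero nonunit, the ideal `(a, t)^n` of `D[t]` needs `n + 1` generators.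
Substituting `t ↦ a t` maps it into `a^n D[t]`; divide by `a^n` and reduce mod `a`. A polynomial
multiplier then acts only through its constant term, so the images `t^i` of the generators
`a^(n-i) t^i` lie in the `D/(a)`-span of the images of any generating set, while they are
`n + 1` linearly independent vectors.
-/

open Polynomial

namespace Polynomial

variable {D : Type*} [CommRing D]

lemma C_pow_sub_mul_X_pow_mem_span_pow (a : D) {i n : ℕ} (hi : i ≤ n) :
    C a ^ (n - i) * X ^ i ∈ Ideal.span {C a, X} ^ n := by
  have := Ideal.mul_mem_mul
    (Ideal.pow_mem_pow (Ideal.subset_span (Set.mem_insert (C a) {X})) (n - i))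
    (Ideal.pow_mem_pow (Ideal.subset_span (Set.mem_insert_of_mem (C a) (Set.mem_singleton X))) i)
  rwa [← pow_add, Nat.sub_add_cancel hi] at this

lemma C_pow_dvd_comp_C_mul_X_of_mem {a : D} {n : ℕ} {f : D[X]}
    (hf : f ∈ Ideal.span {C a, X} ^ n) : C a ^ n ∣ f.comp (C a * X) := by
  have hmap : (Ideal.span {C a, X}).map (compRingHom (C a * X)) ≤ Ideal.span {C a} := by
    rw [Ideal.map_span, Ideal.span_le]
    rintro _ ⟨g, hg, rfl⟩
    rcases hg with rfl | rfl <;> simp [Ideal.mem_span_singleton]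
  rw [← Ideal.mem_span_singleton, ← Ideal.span_singleton_pow]
  exact Ideal.pow_right_mono hmap n
    (Ideal.map_pow (compRingHom (C a * X)) _ n ▸ Ideal.mem_map_of_mem _ hf)

lemma map_comp_C_mul_X_eq_C (a : D) (r : D[X]) :
    (r.comp (C a * X)).map (Ideal.Quotient.mk (Ideal.span {a})) =
      C (Ideal.Quotient.mk (Ideal.span {a}) (r.coeff 0)) := by
  rw [map_comp, Polynomial.map_mul, map_C, map_X, Ideal.Quotient.mk_singleton_self, C_0,
    zero_mul, comp_zero, eval_zero_map, coeff_zero_eq_eval_zero]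

lemma lt_card_of_X_pow_mem_span {k : Type*} [CommRing k] [Nontrivial k] {n : ℕ}
    {w : Finset k[X]} (hw : ∀ i ≤ n, (X : k[X]) ^ i ∈ Submodule.span k (w : Set k[X])) :
    n < w.card := by
  have hli : LinearIndependent k fun i : Fin (n + 1) => (X : k[X]) ^ (i : ℕ) := by
    simpa [Function.comp_def, X_pow_eq_monomial] using
      (basisMonomials k).linearIndependent.comp _ Fin.val_injective
  have := linearIndependent_le_span_aux' _ hli w
    (Set.range_subset_iff.mpr fun i => hw i (Nat.lt_succ_iff.mp i.2))
  simp only [Fintype.card_fin, Finset.coe_sort_coe, Fintype.card_coe] at this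
  exact Nat.lt_of_succ_le this

theorem lt_card_of_span_eq_span_C_X_pow {a : D} (ha : a ∈ nonZeroDivisors D) (hu : ¬IsUnit a)
    {n : ℕ} {s : Finset D[X]} (hs : Ideal.span (s : Set D[X]) = Ideal.span {C a, X} ^ n) :
    n < s.card := by
  classical
  let π : D[X] →+* (D ⧸ Ideal.span {a})[X] := mapRingHom (Ideal.Quotient.mk _)
  have : Nontrivial (D ⧸ Ideal.span {a}) :=
    Ideal.Quotient.nontrivial_iff.mpr (by rwa [Ne, Ideal.span_singleton_eq_top])
  have hC : C a ^ n ∈ nonZeroDivisors D[X] :=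
    mem_nonZeroDivisors_of_leadingCoeff (by rw [← C_pow, leadingCoeff_C]; exact pow_mem ha n)
  choose u hu using fun f (hf : f ∈ s) =>
    C_pow_dvd_comp_C_mul_X_of_mem (hs ▸ Ideal.subset_span hf)
  set w : Finset (D ⧸ Ideal.span {a})[X] := s.attach.image fun f : s => π (u f.1 f.2)
  have hspan : ∀ f ∈ Ideal.span (s : Set D[X]), ∃ g, f.comp (C a * X) = C a ^ n * g ∧
      π g ∈ Submodule.span (D ⧸ Ideal.span {a}) (w : Set _) := by
    intro f hf
    induction hf using Submodule.span_induction with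
    | mem f hf =>
      exact ⟨u f hf, hu f hf, Submodule.subset_span (by simpa [w] using ⟨f, hf, rfl⟩)⟩
    | zero => exact ⟨0, by simp, by simp⟩
    | add f g _ _ hf hg =>
      obtain ⟨g₁, h₁, hw₁⟩ := hf
      obtain ⟨g₂, h₂, hw₂⟩ := hg
      refine ⟨g₁ + g₂, by rw [add_comp, h₁, h₂, mul_add], ?_⟩
      rw [map_add]
      exact add_mem hw₁ hw₂
    | smul r f _ hf =>
      obtain ⟨g, h, hw⟩ := hf
      refine ⟨r.comp (C a * X) * g, by rw [smul_eq_mul, mul_comp, h, mul_left_comm], ?_⟩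
      rw [map_mul, coe_mapRingHom, map_comp_C_mul_X_eq_C, ← smul_eq_C_mul]
      exact Submodule.smul_mem _ _ hw
  refine (lt_card_of_X_pow_mem_span (w := w) fun i hi => ?_).trans_le
    (Finset.card_image_le.trans s.card_attach.le)
  obtain ⟨g, hg, hgw⟩ := hspan _ (hs ▸ C_pow_sub_mul_X_pow_mem_span_pow a hi)
  have hgX : g = X ^ i := by
    rw [← mul_cancel_left_mem_nonZeroDivisors hC, ← hg, mul_comp, X_pow_comp, pow_comp, C_comp,
      mul_pow, ← mul_assoc, pow_sub_mul_pow _ hi]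
  simpa [hgX, π] using hgw

end Polynomial

def IdealsSpannedByAtMost (R : Type*) [CommSemiring R] (n : ℕ) : Prop :=
  ∀ I : Ideal R, ∃ s : Finset R, s.card ≤ n ∧ Ideal.span (s : Set R) = I

namespace IdealsSpannedByAtMost

variable {R S : Type*} [CommRing R] [CommRing S] {n : ℕ}

theorem of_surjective (h : IdealsSpannedByAtMost R n) {f : R →+* S}
    (hf : Function.Surjective f) : IdealsSpannedByAtMost S n := by
  classical
  intro I
  obtain ⟨s, hcard, hs⟩ := h (I.comap f)
  refine ⟨s.image f, Finset.card_image_le.trans hcard, ?_⟩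
  rw [Finset.coe_image, ← Ideal.map_span, hs, Ideal.map_comap_of_surjective f hf]

theorem isNoetherianRing (h : IdealsSpannedByAtMost R n) : IsNoetherianRing R :=
  (isNoetherianRing_iff_ideal_fg R).mpr fun I =>
    let ⟨s, _, hs⟩ := h I
    ⟨s, hs⟩

theorem isField_of_polynomial [IsDomain R] (h : IdealsSpannedByAtMost R[X] n) : IsField R := by
  by_contra hR
  obtain ⟨a, ha, hu⟩ := Ring.exists_not_isUnit_of_not_isField hR
  obtain ⟨s, hcard, hs⟩ := h (Ideal.span {C a, X} ^ n)
  exact (lt_card_of_span_eq_span_C_X_pow (mem_nonZeroDivisors_of_ne_zero ha) hu hs).not_ge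
    hcard

end IdealsSpannedByAtMost

theorem artinian_of_polynomial_finite_rank_general (𝔯 : Type*) [CommRing 𝔯] (n : ℕ)
    (h : ∀ I : Ideal (Polynomial 𝔯),
      ∃ s : Finset (Polynomial 𝔯), s.card ≤ n ∧ Ideal.span (s : Set (Polynomial 𝔯)) = I) :
    IsArtinianRing 𝔯 := by
  have h : IdealsSpannedByAtMost 𝔯[X] n := h
  have : IsNoetherianRing 𝔯 :=
    (h.of_surjective (f := constantCoeff) fun r => ⟨C r, coeff_C_zero⟩).isNoetherianRing
  rw [isArtinianRing_iff_krullDimLE_zero]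
  refine .mk₀ fun p _ => Ideal.Quotient.maximal_of_isField p ?_
  exact (h.of_surjective (f := mapRingHom (Ideal.Quotient.mk p))
    (map_surjective _ Ideal.Quotient.mk_surjective)).isField_of_polynomial

/-- If every ideal of `𝔯[t]` is generated by at most `n` elements (for some fixed `n`),
then `𝔯` is Artinian. -/
theorem artinian_of_polynomial_finite_rank (𝔯 : Type*) [CommRing 𝔯] [Nontrivial 𝔯] (n : ℕ)
    (h : ∀ I : Ideal (Polynomial 𝔯),
      ∃ s : Finset (Polynomial 𝔯), s.card ≤ n ∧ Ideal.span (s : Set (Polynomial 𝔯)) = I) :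
    IsArtinianRing 𝔯 :=
  artinian_of_polynomial_finite_rank_general 𝔯 n h
end

section
/- Let 𝔯 be a local Artinian commutative ring of length ℓ. Then every ideal of the polynomial ring 𝔯[t] can be generated by at most ℓ elements. -/
/-!
Induct on the length of `R`. A nonzero `R` of finite length has a minimal ideal `(x)`, whose
annihilator `𝔮` is maximal. For an ideal `I` of `R[X]`, the ideal `I ∩ x R[X]` is principal,
because `x R[X] ≅ (R ⧸ 𝔮)[X]` is a module over a principal ideal domain; by induction the image
of `I` in `(R ⧸ (x))[X]` needs one generator fewer than the length of `R`, and lifting those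
generators together with a generator of `I ∩ x R[X]` generates `I`.
-/

open Polynomial

namespace Ideal

variable {S T : Type*} [CommRing S] [CommRing T] {f : S →+* T}

theorem eq_sup_inf_ker_of_map_eq (hf : Function.Surjective f) {I J : Ideal S} (hJI : J ≤ I)
    (hmap : J.map f = I.map f) : I = J ⊔ I ⊓ RingHom.ker f := by
  have hle : I ≤ J ⊔ RingHom.ker f := by
    rw [RingHom.ker_eq_comap_bot, ← comap_map_of_surjective f hf, hmap]
    exact le_comap_map
  rw [inf_comm, ← sup_inf_assoc_of_le _ hJI]
  exact (le_inf hle le_rfl).antisymm inf_le_right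

theorem exists_finset_card_le_add_of_surjective (hf : Function.Surjective f)
    {I : Ideal S} {s : Finset S} (hs : span ↑s = I ⊓ RingHom.ker f) {t : Finset T}
    (ht : span ↑t = I.map f) : ∃ u : Finset S, u.card ≤ s.card + t.card ∧ span ↑u = I := by
  classical
  have hlift : ∀ y ∈ t, ∃ p ∈ I, f p = y := fun y hy =>
    (mem_map_iff_of_surjective f hf).mp (ht ▸ subset_span hy)
  choose! g hgI hgf using hlift
  refine ⟨s ∪ t.image g,
    (Finset.card_union_le _ _).trans (by gcongr; exact Finset.card_image_le), ?_⟩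
  have hJI : span ↑(t.image g) ≤ I := span_le.mpr (by simpa [Set.subset_def] using hgI)
  have hmap : (span ↑(t.image g)).map f = I.map f := by
    rw [map_span, Finset.coe_image, Set.image_image, Set.EqOn.image_eq_self hgf, ht]
  rw [Finset.coe_union, span_union, hs, sup_comm, ← eq_sup_inf_ker_of_map_eq hf hJI hmap]

variable {R : Type*} [CommRing R]

theorem exists_span_singleton_eq_of_isAtom {A : Ideal R} (hA : IsAtom A) :
    ∃ x, A = span {x} ∧ ∀ r ∈ Module.annihilator R A, r * x = 0 := by
  obtain ⟨x, hxA, hx0⟩ := Submodule.exists_mem_ne_zero_of_ne_bot hA.1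
  refine ⟨x, ?_, fun r hr => congrArg Subtype.val (Module.mem_annihilator.mp hr ⟨x, hxA⟩)⟩
  exact ((hA.le_iff.mp ((span_singleton_le_iff_mem A).mpr hxA)).resolve_left
    (span_singleton_eq_bot.not.mpr hx0)).symm

end Ideal

theorem Module.length_eq_length_quotient_add_one {R : Type*} [CommRing R] {A : Ideal R}
    (hA : IsAtom A) : Module.length R R = Module.length (R ⧸ A) (R ⧸ A) + 1 := by
  have := isSimpleModule_iff_isAtom.mpr hA
  rw [Module.length_eq_add_of_exact A.subtype A.mkQ Subtype.val_injective A.mkQ_surjective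
    (LinearMap.exact_subtype_mkQ A), Module.length_eq_one,
    ← Module.length_eq_of_surjective (S := R) Ideal.Quotient.mk_surjective, add_comm]

namespace Polynomial

variable {R : Type*} [CommRing R] {𝔮 : Ideal R} {x : R}

theorem C_mul_eq_zero_of_map_quotient_eq_zero (hx : ∀ r ∈ 𝔮, r * x = 0) {p : R[X]}
    (hp : p.map (Ideal.Quotient.mk 𝔮) = 0) : C x * p = 0 := by
  ext n
  have hn : p.coeff n ∈ 𝔮 := by
    simpa [Ideal.Quotient.eq_zero_iff_mem] using congrArg (coeff · n) hp
  rw [coeff_C_mul, coeff_zero, mul_comm, hx _ hn]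

theorem exists_inf_span_C_eq_span_singleton [𝔮.IsMaximal] (hx : ∀ r ∈ 𝔮, r * x = 0)
    (I : Ideal R[X]) : ∃ h, I ⊓ Ideal.span {C x} = Ideal.span {h} := by
  let := Ideal.Quotient.field 𝔮
  set ρ := mapRingHom (Ideal.Quotient.mk 𝔮)
  have hρ : Function.Surjective ρ := map_surjective _ Ideal.Quotient.mk_surjective
  set J := I.colon (Ideal.span {C x})
  have hJ : ∀ p, p ∈ J ↔ p * C x ∈ I := fun p => Submodule.mem_colon_span_singleton
  obtain ⟨g, hg⟩ := (IsPrincipalIdealRing.principal (J.map ρ)).principal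
  rw [Ideal.submodule_span_eq] at hg
  obtain ⟨p₀, hp₀J, rfl⟩ := (Ideal.mem_map_iff_of_surjective ρ hρ).mp
    (hg ▸ Ideal.mem_span_singleton_self g)
  refine ⟨p₀ * C x, le_antisymm ?_ ?_⟩
  · rintro _ ⟨hqI, hqx⟩
    obtain ⟨p, rfl⟩ := Ideal.mem_span_singleton'.mp hqx
    have hp : ρ p ∈ Ideal.span {ρ p₀} := hg ▸ Ideal.mem_map_of_mem ρ ((hJ p).mpr hqI)
    obtain ⟨v, hv⟩ := Ideal.mem_span_singleton'.mp hp
    obtain ⟨u, rfl⟩ := hρ v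
    -- `p * C x` only depends on the image of `p` in `(R ⧸ 𝔮)[X]`
    have hker : C x * (p - u * p₀) = 0 :=
      C_mul_eq_zero_of_map_quotient_eq_zero hx (by
        change ρ (p - u * p₀) = 0
        rw [map_sub, map_mul, hv, sub_self])
    refine Ideal.mem_span_singleton'.mpr ⟨u, ?_⟩
    linear_combination (-1 : R[X]) * hker
  · rw [Ideal.span_le, Set.singleton_subset_iff]
    exact ⟨(hJ p₀).mp hp₀J, Ideal.mul_mem_left _ _ (Ideal.mem_span_singleton_self _)⟩

open Ideal in
theorem exists_finset_card_le_span_eq_of_length_eq (R : Type*) [CommRing R] (n : ℕ)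
    (hlen : Module.length R R = n) (I : Ideal R[X]) :
    ∃ t : Finset R[X], t.card ≤ n ∧ span ↑t = I := by
  induction n generalizing R with
  | zero =>
    have : Subsingleton R := Module.length_eq_zero_iff.mp hlen
    exact ⟨∅, by simp, Subsingleton.elim _ _⟩
  | succ n ih =>
    have hfin : IsFiniteLength R R := Module.length_ne_top_iff.mp (by simp [hlen])
    have : IsArtinianRing R := (isFiniteLength_iff_isNoetherian_isArtinian.mp hfin).2
    have : Nontrivial R := Module.length_pos_iff.mp (by rw [hlen]; exact_mod_cast n.succ_pos)
    obtain ⟨A, hA, -⟩ := (eq_bot_or_exists_atom_le (⊤ : Ideal R)).resolve_left top_ne_bot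
    obtain ⟨x, hAx, hx⟩ := exists_span_singleton_eq_of_isAtom hA
    have := isSimpleModule_iff_isAtom.mpr hA
    have := IsSimpleModule.annihilator_isMaximal (R := R) (M := A)
    obtain ⟨h, hh⟩ := exists_inf_span_C_eq_span_singleton hx I
    have hlenA : Module.length (R ⧸ A) (R ⧸ A) = n := by
      rw [Module.length_eq_length_quotient_add_one hA, Nat.cast_succ] at hlen
      exact WithTop.add_right_cancel ENat.one_ne_top hlen
    obtain ⟨t, ht, hspan⟩ := ih (R ⧸ A) hlenA (I.map (mapRingHom (Ideal.Quotient.mk A)))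
    have hker :
        span ↑({h} : Finset R[X]) = I ⊓ RingHom.ker (mapRingHom (Ideal.Quotient.mk A)) := by
      rw [ker_mapRingHom, mk_ker, hAx, map_span, Set.image_singleton, hh, Finset.coe_singleton]
    obtain ⟨u, hu, rfl⟩ := exists_finset_card_le_add_of_surjective
      (map_surjective _ Ideal.Quotient.mk_surjective) hker hspan
    exact ⟨u, by rw [Finset.card_singleton] at hu; omega, rfl⟩

end Polynomial

theorem polynomial_rank_le_length_general (𝔯 : Type*) [CommRing 𝔯] (ℓ : ℕ)
    (s : CompositionSeries (Submodule 𝔯 𝔯))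
    (hhead : s.head = ⊥) (hlast : s.last = ⊤) (hlen : s.length = ℓ) :
    ∀ I : Ideal (Polynomial 𝔯),
      ∃ t : Finset (Polynomial 𝔯), t.card ≤ ℓ ∧ Ideal.span (t : Set (Polynomial 𝔯)) = I :=
  Polynomial.exists_finset_card_le_span_eq_of_length_eq 𝔯 ℓ
    (hlen ▸ (Module.length_compositionSeries s hhead hlast).symm)

/-- If `𝔯` is a local Artinian ring of length `ℓ`, then every ideal of `𝔯[t]` can be
generated by at most `ℓ` elements. -/
theorem polynomial_rank_le_length (𝔯 : Type*) [CommRing 𝔯] [IsArtinianRing 𝔯]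
    [IsLocalRing 𝔯] (ℓ : ℕ) (s : CompositionSeries (Submodule 𝔯 𝔯))
    (hhead : s.head = ⊥) (hlast : s.last = ⊤) (hlen : s.length = ℓ) :
    ∀ I : Ideal (Polynomial 𝔯),
      ∃ t : Finset (Polynomial 𝔯), t.card ≤ ℓ ∧ Ideal.span (t : Set (Polynomial 𝔯)) = I :=
  polynomial_rank_le_length_general 𝔯 ℓ s hhead hlast hlen
end

section
/- Let p be a prime number and n ≥ 1. In the ring R = (ℤ/pⁿℤ)[t], the ideal 𝔪^{n−1}, where 𝔪 = (p, t), requires exactly n generators; that is, the minimal number of generators of the ideal (p^{n−1}, p^{n−2}t, …, p t^{n−2}, t^{n−1}) is n. Consequently every ideal of (ℤ/pⁿℤ)[t] is generated by at most n elements and this bound is attained. -/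
/-!
Every ideal `I` is generated by the elements `p ^ i * h i` (`i < n`), where `h i` lifts a
generator of the image of the colon ideal `(I : p ^ i)` in the principal ideal domain `𝔽_p[t]`:
modulo `p`, an element of `(I : p ^ k)` is a multiple of `h k`, and the remainder is pushed one
`p`-adic layer deeper, until `p ^ n = 0` ends the descent.

Conversely, the coefficient of `t ^ (n - 1 - i)` of any `f ∈ 𝔪 ^ (n - 1)` is divisible by `p ^ i`.
Its next `p`-adic digit gives a map `𝔪 ^ (n - 1) → 𝔽_p ^ n` which kills `𝔪 ^ n`, is semilinear
along `R → R / 𝔪 = 𝔽_p`, and sends `p ^ i * t ^ (n - 1 - i)` to the `i`-th basis vector; so the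
images of any generating set of `𝔪 ^ (n - 1)` span `𝔽_p ^ n`.
-/

open Polynomial

theorem Ideal.le_span_image_pow_mul {R S : Type*} [CommRing R] [CommRing S] {ρ : R →+* S}
    (hρ : Function.Surjective ρ) {ϖ : R} (hker : RingHom.ker ρ ≤ Ideal.span {ϖ}) {n : ℕ}
    (hϖ : ϖ ^ n = 0) {I : Ideal R} {h : ℕ → R} (hmem : ∀ i, ϖ ^ i * h i ∈ I)
    (hgen : ∀ i, (I.colon {ϖ ^ i}).map ρ = Ideal.span {ρ (h i)}) :
    I ≤ Ideal.span ((fun i => ϖ ^ i * h i) '' Set.Iio n) := by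
  set J := Ideal.span ((fun i => ϖ ^ i * h i) '' Set.Iio n)
  have hJ (i : ℕ) : ϖ ^ i * h i ∈ J := by
    by_cases hi : i < n
    · exact subset_span ⟨i, hi, rfl⟩
    · rw [pow_eq_zero_of_le (not_lt.1 hi) hϖ, zero_mul]
      exact zero_mem _
  have key (d : ℕ) : ∀ k, n ≤ k + d → ∀ g, ϖ ^ k * g ∈ I → ϖ ^ k * g ∈ J := by
    induction d with
    | zero =>
      intro k hk g _
      rw [pow_eq_zero_of_le (by omega) hϖ, zero_mul]
      exact zero_mem _
    | succ d ih =>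
      intro k hk g hg
      have hgk : ρ g ∈ (I.colon {ϖ ^ k}).map ρ :=
        mem_map_of_mem ρ (Submodule.mem_colon_singleton.2 (by rwa [smul_eq_mul, mul_comm]))
      obtain ⟨q, hq⟩ := mem_span_singleton'.1 (hgen k ▸ hgk)
      obtain ⟨a, rfl⟩ := hρ q
      obtain ⟨b, hb⟩ : ϖ ∣ g - a * h k :=
        mem_span_singleton.1 (hker (by simp [RingHom.mem_ker, hq]))
      have hb' : ϖ ^ (k + 1) * b = ϖ ^ k * g - a * (ϖ ^ k * h k) := by
        linear_combination -ϖ ^ k * hb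
      rw [show ϖ ^ k * g = a * (ϖ ^ k * h k) + ϖ ^ (k + 1) * b by rw [hb']; ring]
      refine add_mem (mul_mem_left _ _ (hJ k)) (ih (k + 1) (by omega) b ?_)
      rw [hb']
      exact sub_mem hg (mul_mem_left _ _ (hmem k))
  intro f hf
  simpa using key n 0 (by omega) f (by simpa using hf)

theorem Ideal.exists_finset_card_le_span_eq_of_pow_eq_zero {R S : Type*} [CommRing R]
    [CommRing S] [IsPrincipalIdealRing S] {ρ : R →+* S} (hρ : Function.Surjective ρ) {ϖ : R}
    (hker : RingHom.ker ρ ≤ Ideal.span {ϖ}) {n : ℕ} (hϖ : ϖ ^ n = 0) (I : Ideal R) :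
    ∃ s : Finset R, s.card ≤ n ∧ Ideal.span (s : Set R) = I := by
  classical
  have hlift (i : ℕ) : ∃ h ∈ I.colon {ϖ ^ i},
      ρ h = Submodule.IsPrincipal.generator ((I.colon {ϖ ^ i}).map ρ) :=
    (mem_map_iff_of_surjective ρ hρ).1 (Submodule.IsPrincipal.generator_mem _)
  choose h hcolon hgen using hlift
  have hmem (i : ℕ) : ϖ ^ i * h i ∈ I := by
    simpa [mul_comm] using Submodule.mem_colon_singleton.1 (hcolon i)
  refine ⟨(Finset.range n).image fun i => ϖ ^ i * h i,
    Finset.card_image_le.trans (by simp), ?_⟩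
  rw [Finset.coe_image, Finset.coe_range]
  refine le_antisymm (span_le.2 ?_) (le_span_image_pow_mul hρ hker hϖ hmem fun i => ?_)
  · rintro _ ⟨i, -, rfl⟩
    exact hmem i
  · rw [hgen]
    exact (Submodule.IsPrincipal.span_singleton_generator _).symm

theorem Submodule.finrank_le_card_of_span_eq {R K M V : Type*} [CommRing R] [Field K]
    [AddCommGroup M] [Module R M] [AddCommGroup V] [Module K V] {σ : R →+* K}
    [RingHomSurjective σ] {N : Submodule R M} {s : Finset M} (hs : span R (s : Set M) = N)
    (Φ : N →ₛₗ[σ] V) (hΦ : Function.Surjective Φ) : Module.finrank K V ≤ s.card := by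
  subst hs
  let b : s → V := fun x => Φ ⟨x, subset_span x.2⟩
  have hb : Set.range b = Φ '' ((↑) ⁻¹' (s : Set M)) := by
    ext v
    simp only [b, Set.mem_range, Set.mem_image, Set.mem_preimage, Subtype.exists,
      Finset.mem_coe]
    exact ⟨fun ⟨a, ha, h⟩ => ⟨a, subset_span ha, ha, h⟩, fun ⟨a, _, ha, h⟩ => ⟨a, ha, h⟩⟩
  have htop : span K (Set.range b) = ⊤ := by
    rw [hb, ← Submodule.map_span, span_span_coe_preimage, Submodule.map_top,
      LinearMap.range_eq_top.2 hΦ]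
  calc Module.finrank K V = (Set.range b).finrank K := by
        rw [Set.finrank, htop, finrank_top]
    _ ≤ s.card := by simpa using finrank_range_le_card b

theorem Polynomial.pow_dvd_coeff_of_mem_span_C_X_pow {A : Type*} [CommRing A] (a : A) {k : ℕ}
    {f : A[X]} (hf : f ∈ Ideal.span {C a, X} ^ k) (j : ℕ) : a ^ (k - j) ∣ f.coeff j := by
  induction k generalizing f j with
  | zero => simp
  | succ k ih =>
    rw [pow_succ] at hf
    refine Submodule.mul_induction_on (C := fun g => ∀ j, a ^ (k + 1 - j) ∣ g.coeff j) hf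
      (fun m hm x hx j => ?_)
      (fun x y hx hy j => by rw [coeff_add]; exact dvd_add (hx j) (hy j)) j
    obtain ⟨u, v, rfl⟩ := Ideal.mem_span_pair.1 hx
    rw [mul_add, ← mul_assoc, ← mul_assoc, coeff_add, coeff_mul_C]
    refine dvd_add ((pow_dvd_pow a (by omega : k + 1 - j ≤ k - j + 1)).trans ?_) ?_
    · rw [pow_succ]
      exact mul_dvd_mul_right (ih (Ideal.mul_mem_right u _ hm) j) a
    · cases j with
      | zero => simp
      | succ j =>
        rw [coeff_mul_X]
        exact (pow_dvd_pow a (by omega : k + 1 - (j + 1) ≤ k - j)).trans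
          (ih (Ideal.mul_mem_right v _ hm) j)

theorem Polynomial.pow_dvd_coeff_sub_of_mem_span_C_X_pow {A : Type*} [CommRing A] (a : A)
    {k i : ℕ} {f : A[X]} (hf : f ∈ Ideal.span {C a, X} ^ k) (hi : i ≤ k) :
    a ^ i ∣ f.coeff (k - i) := by
  simpa [Nat.sub_sub_self hi] using pow_dvd_coeff_of_mem_span_C_X_pow a hf (k - i)

namespace ZMod

def digit (p i : ℕ) {m : ℕ} (x : ZMod m) : ZMod p := ((x.val / p ^ i : ℕ) : ZMod p)

@[simp]
theorem digit_zero (p i m : ℕ) : digit p i (0 : ZMod m) = 0 := by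
  simp [digit]

theorem digit_pow_mul {p n i : ℕ} [NeZero p] (hi : i < n) (a : ZMod (p ^ n)) :
    digit p i ((p : ZMod (p ^ n)) ^ i * a) =
      castHom (dvd_pow_self p (Nat.ne_zero_of_lt hi)) (ZMod p) a := by
  have hcast : (p : ZMod (p ^ n)) ^ i * a = ((p ^ i * a.val : ℕ) : ZMod (p ^ n)) := by
    push_cast
    rw [natCast_zmod_val]
  have hdiv : p ^ i * a.val % p ^ n / p ^ i = a.val % p ^ (n - i) := by
    generalize a.val = v
    rw [← Nat.add_sub_cancel' hi.le, pow_add, Nat.add_sub_cancel_left, Nat.mul_mod_mul_left,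
      Nat.mul_div_cancel_left _ (pow_pos (NeZero.pos p) i)]
  rw [digit, hcast, val_natCast, hdiv, castHom_apply, cast_eq_val, natCast_eq_natCast_iff' _ _ p,
    Nat.mod_mod_of_dvd _ (dvd_pow_self p (by omega))]

theorem natCast_dvd_of_castHom_eq_zero {m n : ℕ} [NeZero n] (h : m ∣ n) {x : ZMod n}
    (hx : castHom h (ZMod m) x = 0) : (m : ZMod n) ∣ x := by
  rw [castHom_apply, cast_eq_val, natCast_eq_zero_iff] at hx
  obtain ⟨c, hc⟩ := hx
  exact ⟨c, by rw [← natCast_zmod_val x, hc, Nat.cast_mul]⟩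

end ZMod

namespace ZModPowPolynomial

variable {p n : ℕ}

variable (p n) in
noncomputable def idealPX : Ideal (ZMod (p ^ n))[X] := Ideal.span {C (p : ZMod (p ^ n)), X}

theorem ker_mapRingHom_castHom_le [NeZero p] (hn : n ≠ 0) :
    RingHom.ker (mapRingHom (ZMod.castHom (dvd_pow_self p hn) (ZMod p))) ≤
      Ideal.span {C (p : ZMod (p ^ n))} := fun f hf => by
  refine Ideal.mem_span_singleton.2 ((C_dvd_iff_dvd_coeff _ _).2 fun j => ?_)
  refine ZMod.natCast_dvd_of_castHom_eq_zero (dvd_pow_self p hn) ?_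
  simpa using congrArg (coeff · j) (RingHom.mem_ker.1 hf)

noncomputable def residueMap (hn : n ≠ 0) : (ZMod (p ^ n))[X] →+* ZMod p :=
  (ZMod.castHom (dvd_pow_self p hn) (ZMod p)).comp constantCoeff

instance (hn : n ≠ 0) : RingHomSurjective (residueMap (p := p) hn) :=
  ⟨fun y => by
    obtain ⟨a, rfl⟩ := ZMod.castHom_surjective (dvd_pow_self p hn) y
    exact ⟨C a, by simp [residueMap]⟩⟩

theorem C_pow_mul_X_pow_mem_pow {i : ℕ} (hi : i < n) :
    C (p : ZMod (p ^ n)) ^ i * X ^ (n - 1 - i) ∈ idealPX p n ^ (n - 1) := by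
  have h := Ideal.mul_mem_mul
    (Ideal.pow_mem_pow (Ideal.subset_span (Set.mem_insert (C (p : ZMod (p ^ n))) {X})) i)
    (Ideal.pow_mem_pow (Ideal.subset_span (Set.mem_insert_of_mem (C (p : ZMod (p ^ n)))
      (Set.mem_singleton X))) (n - 1 - i))
  rwa [← pow_add, Nat.add_sub_cancel' (by omega : i ≤ n - 1)] at h

variable [NeZero p]

theorem digit_coeff_add {i : ℕ} (hi : i < n) {f g : (ZMod (p ^ n))[X]}
    (hf : f ∈ idealPX p n ^ (n - 1)) (hg : g ∈ idealPX p n ^ (n - 1)) :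
    ZMod.digit p i ((f + g).coeff (n - 1 - i)) =
      ZMod.digit p i (f.coeff (n - 1 - i)) + ZMod.digit p i (g.coeff (n - 1 - i)) := by
  obtain ⟨c, hc⟩ := pow_dvd_coeff_sub_of_mem_span_C_X_pow _ hf (by omega : i ≤ n - 1)
  obtain ⟨d, hd⟩ := pow_dvd_coeff_sub_of_mem_span_C_X_pow _ hg (by omega : i ≤ n - 1)
  rw [coeff_add, hc, hd, ← mul_add, ZMod.digit_pow_mul hi, ZMod.digit_pow_mul hi,
    ZMod.digit_pow_mul hi, map_add]

theorem digit_coeff_eq_zero_of_mem_pow {i : ℕ} (hi : i < n) {g : (ZMod (p ^ n))[X]}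
    (hg : g ∈ idealPX p n ^ n) : ZMod.digit p i (g.coeff (n - 1 - i)) = 0 := by
  obtain ⟨c, hc⟩ := pow_dvd_coeff_sub_of_mem_span_C_X_pow _ hg (by omega : i + 1 ≤ n)
  rw [show n - 1 - i = n - (i + 1) by omega, hc, pow_succ, mul_assoc, ZMod.digit_pow_mul hi,
    map_mul, map_natCast, ZMod.natCast_self, zero_mul]

theorem digit_coeff_mul (hn : n ≠ 0) {i : ℕ} (hi : i < n) (r : (ZMod (p ^ n))[X])
    {f : (ZMod (p ^ n))[X]} (hf : f ∈ idealPX p n ^ (n - 1)) :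
    ZMod.digit p i ((r * f).coeff (n - 1 - i)) =
      residueMap hn r * ZMod.digit p i (f.coeff (n - 1 - i)) := by
  have hX : r - C (r.coeff 0) ∈ idealPX p n := by
    obtain ⟨q, hq⟩ := X_dvd_sub_C (p := r)
    rw [hq]
    exact Ideal.mul_mem_right _ _ (Ideal.subset_span (by simp))
  have hrest : (r - C (r.coeff 0)) * f ∈ idealPX p n ^ n := by
    have h := Ideal.mul_mem_mul hX hf
    rwa [← pow_succ', Nat.sub_add_cancel (Nat.one_le_iff_ne_zero.2 hn)] at h
  obtain ⟨c, hc⟩ := pow_dvd_coeff_sub_of_mem_span_C_X_pow _ hf (by omega : i ≤ n - 1)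
  rw [show r * f = C (r.coeff 0) * f + (r - C (r.coeff 0)) * f by ring,
    digit_coeff_add hi (Ideal.mul_mem_left _ _ hf) (Ideal.pow_le_pow_right (by omega) hrest),
    digit_coeff_eq_zero_of_mem_pow hi hrest, add_zero, coeff_C_mul, hc, mul_left_comm,
    ZMod.digit_pow_mul hi, ZMod.digit_pow_mul hi, map_mul]
  rfl

noncomputable def leadingDigits (hn : n ≠ 0) :
    ↥(idealPX p n ^ (n - 1)) →ₛₗ[residueMap (p := p) hn] (Fin n → ZMod p) where
  toFun f i := ZMod.digit p i ((f : (ZMod (p ^ n))[X]).coeff (n - 1 - i))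
  map_add' f g := funext fun i => digit_coeff_add i.2 f.2 g.2
  map_smul' r f := funext fun i => digit_coeff_mul hn i.2 r f.2

theorem leadingDigits_C_pow_mul_X_pow (hn : n ≠ 0) (i : Fin n) :
    leadingDigits hn ⟨_, C_pow_mul_X_pow_mem_pow i.2⟩ = Pi.single i (1 : ZMod p) := by
  funext j
  change ZMod.digit p j
    ((C (p : ZMod (p ^ n)) ^ (i : ℕ) * X ^ (n - 1 - i)).coeff (n - 1 - j)) = _
  rw [← C_pow, coeff_C_mul, coeff_X_pow]
  obtain rfl | hij := eq_or_ne j i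
  · rw [if_pos rfl, Pi.single_eq_same, ZMod.digit_pow_mul j.2, map_one]
  · have : n - 1 - (j : ℕ) ≠ n - 1 - i := by omega
    rw [if_neg this, mul_zero, ZMod.digit_zero, Pi.single_eq_of_ne hij]

theorem leadingDigits_surjective (hn : n ≠ 0) :
    Function.Surjective (leadingDigits (p := p) hn) := by
  rw [← LinearMap.range_eq_top, eq_top_iff, ← (Pi.basisFun (ZMod p) (Fin n)).span_eq,
    Submodule.span_le]
  rintro _ ⟨i, rfl⟩
  exact ⟨_, by rw [Pi.basisFun_apply, leadingDigits_C_pow_mul_X_pow]⟩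

end ZModPowPolynomial

open ZModPowPolynomial

/-- In `(ℤ/pⁿℤ)[t]` with `𝔪 = (p, t)`, the ideal `𝔪^{n-1}` requires exactly `n`
generators, and every ideal is generated by at most `n` elements. -/
theorem zmod_polynomial_rank (p n : ℕ) (hp : p.Prime) (hn : 1 ≤ n)
    (𝔪 : Ideal (Polynomial (ZMod (p ^ n))))
    (h𝔪 : 𝔪 = Ideal.span {Polynomial.C (p : ZMod (p ^ n)), Polynomial.X}) :
    (∃ s : Finset (Polynomial (ZMod (p ^ n))), s.card ≤ n ∧
        Ideal.span (s : Set (Polynomial (ZMod (p ^ n)))) = 𝔪 ^ (n - 1)) ∧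
      (¬ ∃ s : Finset (Polynomial (ZMod (p ^ n))), s.card ≤ n - 1 ∧
        Ideal.span (s : Set (Polynomial (ZMod (p ^ n)))) = 𝔪 ^ (n - 1)) ∧
      ∀ I : Ideal (Polynomial (ZMod (p ^ n))),
        ∃ s : Finset (Polynomial (ZMod (p ^ n))), s.card ≤ n ∧
          Ideal.span (s : Set (Polynomial (ZMod (p ^ n)))) = I := by
  subst h𝔪
  have : Fact p.Prime := ⟨hp⟩
  have hn0 : n ≠ 0 := by omega
  have hgen (I : Ideal (ZMod (p ^ n))[X]) : ∃ s : Finset (ZMod (p ^ n))[X], s.card ≤ n ∧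
      Ideal.span (s : Set (ZMod (p ^ n))[X]) = I :=
    Ideal.exists_finset_card_le_span_eq_of_pow_eq_zero
      (map_surjective _ (ZMod.castHom_surjective _)) (ker_mapRingHom_castHom_le hn0)
      (by rw [← C_pow, ← Nat.cast_pow, ZMod.natCast_self, C_0]) I
  refine ⟨hgen _, ?_, hgen⟩
  rintro ⟨s, hcard, hspan⟩
  have := Submodule.finrank_le_card_of_span_eq hspan (leadingDigits hn0)
    (leadingDigits_surjective hn0)
  rw [Module.finrank_fin_fun] at this
  omega
end

section
/- Let 𝔯 be a local Artinian principal ring with maximal ideal generated by π and of length (= nilpotency index) n. Then in R = 𝔯[t], with 𝔪 = (π, t), we have dim_k 𝔪^{n−1}/𝔪^{n} = n where k = 𝔯/(π); hence 𝔪^{n−1} requires exactly n generators. -/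
/-!
Evaluating at `X = 0` and reducing mod `π` identifies `𝔯[X] ⧸ (π, X)` with the residue field `k`.
The ideal `(π, X) ^ m` is generated by the `m + 1` monomials `π ^ i * X ^ (m - i)`, so their
classes span `(π, X) ^ m ⧸ (π, X) ^ (m + 1)` over `k`. They are also independent: the coefficient
of `X ^ d` of an element of `(π, X) ^ (m + 1)` is divisible by `π ^ (m + 1 - d)`, so a relation
`∑ c i * π ^ i * X ^ (m - i) ∈ (π, X) ^ (m + 1)` with constants `c i` gives
`π ^ (i + 1) ∣ c i * π ^ i`, and since `π ^ i ≠ 0` for `i ≤ m = n - 1` while `(π)` is the maximal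
ideal, `π ∣ c i`. Any finite generating set of `(π, X) ^ m` spans this `k`-space, hence has at
least `n` elements.
-/
open Polynomial

namespace Ideal

variable {R : Type*} [CommRing R]

theorem pow_mul_pow_sub_mem_span_pair_pow (a b : R) {m i : ℕ} (hi : i ≤ m) :
    a ^ i * b ^ (m - i) ∈ span {a, b} ^ m := by
  rw [← Nat.add_sub_cancel' hi, pow_add, Nat.add_sub_cancel_left]
  exact mul_mem_mul (pow_mem_pow (subset_span (by simp)) i)
    (pow_mem_pow (subset_span (by simp)) (m - i))

open scoped Pointwise in
theorem span_pair_pow (a b : R) (m : ℕ) :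
    span {a, b} ^ m = span (Set.range fun i : Fin (m + 1) => a ^ (i : ℕ) * b ^ (m - i)) := by
  refine le_antisymm ?_ (span_le.2 ?_)
  · induction m with
    | zero => simp [one_eq_top]
    | succ m ih =>
      have hstep : {a, b} * (Set.range fun i : Fin (m + 1) => a ^ (i : ℕ) * b ^ (m - i)) ⊆
          Set.range fun i : Fin (m + 2) => a ^ (i : ℕ) * b ^ (m + 1 - i) := by
        rintro _ ⟨x, hx, _, ⟨i, rfl⟩, rfl⟩
        rcases hx with rfl | rfl
        · exact ⟨i.succ, by simp only [Fin.val_succ, Nat.add_sub_add_right]; ring⟩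
        · refine ⟨i.castSucc, ?_⟩
          simp only [Fin.val_castSucc, Nat.sub_add_comm (Nat.lt_succ_iff.1 i.2)]
          ring
      rw [pow_succ']
      refine (mul_mono_right ih).trans ?_
      rw [span_mul_span']
      exact span_mono hstep
  · rintro _ ⟨i, rfl⟩
    exact pow_mul_pow_sub_mem_span_pair_pow a b (Nat.lt_succ_iff.1 i.2)

end Ideal

section QuotientSmulTop

open Submodule

variable {R M : Type*} [CommRing R] [AddCommGroup M] [Module R M] (I : Ideal R) {N : Submodule R M}

theorem span_range_mkQ_smul_top_eq_top {ι : Type*} (w : ι → N)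
    (hw : span R (Set.range fun i => (w i : M)) = N) :
    span (R ⧸ I) (Set.range fun i => (I • ⊤ : Submodule R N).mkQ (w i)) = ⊤ := by
  have htop : span R (Set.range w) = ⊤ := by
    apply map_injective_of_injective N.injective_subtype
    rw [map_span, ← Set.range_comp, Submodule.map_top, range_subtype]
    exact hw
  apply restrictScalars_injective R
  rw [restrictScalars_span R (R ⧸ I) Ideal.Quotient.mk_surjective, Set.range_comp', span_image,
    htop, Submodule.map_top, range_mkQ, restrictScalars_top]

theorem finrank_quotient_smul_top_le_card [I.IsMaximal] (t : Finset M) (ht : span R t = N) :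
    Module.finrank (R ⧸ I) (N ⧸ (I • ⊤ : Submodule R N)) ≤ t.card := by
  let _ := Ideal.Quotient.field I
  have hspan := span_range_mkQ_smul_top_eq_top I (fun x : t => (⟨x, ht ▸ subset_span x.2⟩ : N))
    (by simpa using ht)
  rw [← finrank_top, ← hspan]
  exact (finrank_range_le_card _).trans_eq (Fintype.card_coe t)

end QuotientSmulTop

theorem IsLocalRing.dvd_of_pow_succ_dvd_mul_pow {A : Type*} [CommRing A] [IsLocalRing A]
    {π x : A} (hπ : maximalIdeal A = Ideal.span {π}) {i : ℕ} (hi : π ^ i ≠ 0)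
    (h : π ^ (i + 1) ∣ x * π ^ i) : π ∣ x := by
  obtain ⟨y, hy⟩ := h
  have hzero : (x - π * y) * π ^ i = 0 := by rw [sub_mul, hy, pow_succ]; ring
  have hnonunit : x - π * y ∈ maximalIdeal A :=
    (mem_maximalIdeal _).2 fun hu => hi ((hu.mul_right_eq_zero).1 hzero)
  rw [hπ, Ideal.mem_span_singleton] at hnonunit
  exact (dvd_sub_left (dvd_mul_right π y)).1 hnonunit

namespace Polynomial

variable {A : Type*} [CommRing A]

theorem mem_span_C_X_iff {a : A} {f : A[X]} :
    f ∈ Ideal.span {C a, X} ↔ a ∣ f.coeff 0 := by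
  rw [Ideal.mem_span_pair]
  constructor
  · rintro ⟨u, v, rfl⟩
    simp [mul_coeff_zero]
  · rintro ⟨c, hc⟩
    refine ⟨C c, divX f, ?_⟩
    rw [← C_mul, mul_comm c, ← hc, add_comm, mul_comm]
    exact f.X_mul_divX_add

noncomputable def quotientSpanCXRingEquiv (a : A) :
    A[X] ⧸ Ideal.span {C a, X} ≃+* A ⧸ Ideal.span {a} :=
  (Ideal.quotEquivOfEq (by simp)).trans (quotientSpanCXSubCAlgEquiv a 0).toRingEquiv

theorem isMaximal_span_C_X [IsLocalRing A] {π : A}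
    (hπ : IsLocalRing.maximalIdeal A = Ideal.span {π}) : (Ideal.span {C π, X}).IsMaximal := by
  have : (Ideal.span {π}).IsMaximal := hπ ▸ IsLocalRing.maximalIdeal.isMaximal A
  exact Ideal.Quotient.maximal_of_isField _ ((quotientSpanCXRingEquiv π).toMulEquiv.isField
    (Ideal.Quotient.maximal_ideal_iff_isField_quotient _ |>.1 this))

theorem pow_sub_dvd_coeff_of_mem_span_C_X_pow {a : A} {m : ℕ} {f : A[X]}
    (hf : f ∈ Ideal.span {C a, X} ^ m) (d : ℕ) : a ^ (m - d) ∣ f.coeff d := by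
  rw [Ideal.span_pair_pow] at hf
  induction hf using Submodule.span_induction generalizing d with
  | mem _ hx =>
    obtain ⟨i, rfl⟩ := hx
    dsimp only
    rw [← C_pow, coeff_C_mul_X_pow]
    split_ifs with hd
    · rw [hd, Nat.sub_sub_self (Nat.lt_succ_iff.1 i.2)]
    · exact dvd_zero _
  | zero => simp
  | add _ _ _ _ hx hy => rw [coeff_add]; exact dvd_add (hx d) (hy d)
  | smul r _ _ hx =>
    rw [smul_eq_mul, coeff_mul]
    refine Finset.dvd_sum fun p hp => ((pow_dvd_pow a ?_).trans (hx p.2)).mul_left _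
    have := Finset.HasAntidiagonal.mem_antidiagonal.1 hp
    omega

theorem dvd_of_sum_C_mul_mem_span_C_X_pow_succ [IsLocalRing A] {π : A}
    (hπ : IsLocalRing.maximalIdeal A = Ideal.span {π}) {m : ℕ} (hm : π ^ m ≠ 0)
    (c : Fin (m + 1) → A)
    (h : ∑ j, C (c j) * (C π ^ (j : ℕ) * X ^ (m - j)) ∈ Ideal.span {C π, X} ^ (m + 1))
    (i : Fin (m + 1)) : π ∣ c i := by
  have hi : (i : ℕ) ≤ m := Nat.lt_succ_iff.1 i.2
  have hcoeff :
      (∑ j, C (c j) * (C π ^ (j : ℕ) * X ^ (m - j))).coeff (m - i) = c i * π ^ (i : ℕ) := by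
    simp only [finsetSum_coeff, ← mul_assoc, ← C_pow, ← C_mul, coeff_C_mul_X_pow]
    rw [Finset.sum_eq_single i (fun j _ hj => if_neg ?_) (by simp), if_pos rfl]
    have := Nat.lt_succ_iff.1 j.2
    omega
  have hdvd := pow_sub_dvd_coeff_of_mem_span_C_X_pow h (m - i)
  rw [hcoeff, show m + 1 - (m - i) = i + 1 by omega] at hdvd
  exact IsLocalRing.dvd_of_pow_succ_dvd_mul_pow hπ (fun h0 => hm (pow_eq_zero_of_le hi h0)) hdvd

noncomputable def monomialGenerators (π : A) (m : ℕ) :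
    Fin (m + 1) → (Ideal.span {C π, X} ^ m : Ideal A[X]) := fun i =>
  ⟨C π ^ (i : ℕ) * X ^ (m - i),
    Ideal.pow_mul_pow_sub_mem_span_pair_pow _ _ (Nat.lt_succ_iff.1 i.2)⟩

theorem linearIndependent_mkQ_monomialGenerators [IsLocalRing A] {π : A}
    (hπ : IsLocalRing.maximalIdeal A = Ideal.span {π}) {m : ℕ} (hm : π ^ m ≠ 0) :
    LinearIndependent (A[X] ⧸ Ideal.span {C π, X}) fun i =>
      (Ideal.span {C π, X} • ⊤ : Submodule A[X] (Ideal.span {C π, X} ^ m : Ideal A[X])).mkQ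
        (monomialGenerators π m i) := by
  set 𝔪 : Ideal A[X] := Ideal.span {C π, X}
  rw [Fintype.linearIndependent_iff]
  intro g hg i
  have hlift : ∀ j, ∃ c : A, Ideal.Quotient.mk 𝔪 (C c) = g j := fun j => by
    obtain ⟨f, hf⟩ := Ideal.Quotient.mk_surjective (g j)
    rw [← hf]
    exact ⟨f.coeff 0, Ideal.Quotient.eq.2 (mem_span_C_X_iff.2 (by simp))⟩
  choose c hc using hlift
  have hsum : ∑ j, C (c j) • monomialGenerators π m j ∈
      (𝔪 • ⊤ : Submodule A[X] (𝔪 ^ m : Ideal A[X])) := by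
    rw [← Submodule.Quotient.mk_eq_zero, ← hg]
    simp only [← Submodule.mkQ_apply, map_sum, map_smul, ← hc]
    rfl
  rw [Submodule.mem_smul_top_iff, Ideal.smul_eq_mul, ← pow_succ'] at hsum
  rw [← hc i, Ideal.Quotient.eq_zero_iff_mem, mem_span_C_X_iff, coeff_C_zero]
  exact dvd_of_sum_C_mul_mem_span_C_X_pow_succ hπ hm c
    (by simpa [monomialGenerators] using hsum) i

end Polynomial

theorem local_principal_artinian_polynomial_general (𝔯 : Type*) [CommRing 𝔯]
    [IsLocalRing 𝔯] (π : 𝔯)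
    (hπ : IsLocalRing.maximalIdeal 𝔯 = Ideal.span {π}) (n : ℕ) (hn : 1 ≤ n)
    (hnilp' : π ^ (n - 1) ≠ 0)
    (𝔪 : Ideal (Polynomial 𝔯))
    (h𝔪 : 𝔪 = Ideal.span {Polynomial.C π, Polynomial.X}) :
    Nonempty ((Polynomial 𝔯 ⧸ 𝔪) ≃+* 𝔯 ⧸ Ideal.span {π}) ∧
      Module.finrank (Polynomial 𝔯 ⧸ 𝔪)
        ((𝔪 ^ (n - 1) : Ideal (Polynomial 𝔯)) ⧸
          (𝔪 • (⊤ : Submodule (Polynomial 𝔯) (𝔪 ^ (n - 1) : Ideal (Polynomial 𝔯))))) = n ∧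
      (∃ t : Finset (Polynomial 𝔯), t.card ≤ n ∧
        Ideal.span (t : Set (Polynomial 𝔯)) = 𝔪 ^ (n - 1)) ∧
      ¬ ∃ t : Finset (Polynomial 𝔯), t.card ≤ n - 1 ∧
        Ideal.span (t : Set (Polynomial 𝔯)) = 𝔪 ^ (n - 1) := by
  classical
  obtain ⟨m, rfl⟩ : ∃ m, n = m + 1 := ⟨n - 1, by omega⟩
  subst h𝔪
  rw [Nat.add_sub_cancel] at hnilp' ⊢
  have := isMaximal_span_C_X hπ
  let _ := Ideal.Quotient.field (Ideal.span {C π, X})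
  have hgen : Ideal.span (Set.range fun i => (monomialGenerators π m i : 𝔯[X])) =
      Ideal.span {C π, X} ^ m := (Ideal.span_pair_pow _ _ m).symm
  let b := Module.Basis.mk (linearIndependent_mkQ_monomialGenerators hπ hnilp')
    (span_range_mkQ_smul_top_eq_top _ _ hgen).ge
  have hrank := Module.finrank_eq_card_basis b
  rw [Fintype.card_fin] at hrank
  refine ⟨⟨quotientSpanCXRingEquiv π⟩, hrank,
    ⟨Finset.univ.image fun i => (monomialGenerators π m i : 𝔯[X]), ?_, ?_⟩, ?_⟩
  · exact Finset.card_image_le.trans (by simp)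
  · simpa using hgen
  · rintro ⟨t, htcard, hspan⟩
    have := finrank_quotient_smul_top_le_card (Ideal.span {C π, X}) t hspan
    omega

/-- Let `𝔯` be a local Artinian principal ring with maximal ideal `(π)` and length
(= nilpotency index) `n`.  In `R = 𝔯[t]` with `𝔪 = (π, t)` and `k = 𝔯/(π)`, we have
`dim_k 𝔪^{n-1}/𝔪^n = n`; hence `𝔪^{n-1}` requires exactly `n` generators. -/
theorem local_principal_artinian_polynomial (𝔯 : Type*) [CommRing 𝔯] [IsArtinianRing 𝔯]
    [IsLocalRing 𝔯] [IsPrincipalIdealRing 𝔯] (π : 𝔯)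
    (hπ : IsLocalRing.maximalIdeal 𝔯 = Ideal.span {π}) (n : ℕ) (hn : 1 ≤ n)
    (hnilp : π ^ n = 0) (hnilp' : π ^ (n - 1) ≠ 0)
    (s : CompositionSeries (Submodule 𝔯 𝔯))
    (hhead : s.head = ⊥) (hlast : s.last = ⊤) (hlen : s.length = n)
    (𝔪 : Ideal (Polynomial 𝔯))
    (h𝔪 : 𝔪 = Ideal.span {Polynomial.C π, Polynomial.X}) :
    Nonempty ((Polynomial 𝔯 ⧸ 𝔪) ≃+* 𝔯 ⧸ Ideal.span {π}) ∧
      Module.finrank (Polynomial 𝔯 ⧸ 𝔪)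
        ((𝔪 ^ (n - 1) : Ideal (Polynomial 𝔯)) ⧸
          (𝔪 • (⊤ : Submodule (Polynomial 𝔯) (𝔪 ^ (n - 1) : Ideal (Polynomial 𝔯))))) = n ∧
      (∃ t : Finset (Polynomial 𝔯), t.card ≤ n ∧
        Ideal.span (t : Set (Polynomial 𝔯)) = 𝔪 ^ (n - 1)) ∧
      ¬ ∃ t : Finset (Polynomial 𝔯), t.card ≤ n - 1 ∧
        Ideal.span (t : Set (Polynomial 𝔯)) = 𝔪 ^ (n - 1) :=
  local_principal_artinian_polynomial_general 𝔯 π hπ n hn hnilp' 𝔪 h𝔪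
end

section
/- Let S be a discrete valuation ring with residue field l, let k be a subfield of l with [l : k] = d finite, let q : S → l be the quotient map, and let R = q⁻¹(k). Then R is a local ring whose maximal ideal 𝔪 equals the maximal ideal of S, R/𝔪 ≅ k, and dim_k 𝔪/𝔪² = d. -/
/-!
An element of `R` outside `𝔪_S` is a unit of `S` whose inverse again has residue in the
field `k`, so the inclusion `R → S` is a local homomorphism: `R` is local with maximal ideal
`𝔪_S` and residue field `k`. Since `s * a * b = (s * a) * b` with `s * a ∈ 𝔪_S ⊆ R`, the
square of `𝔪_S` is the same in `R` as in `S`, so `𝔪_R/𝔪_R² = 𝔪_S/𝔪_S²`, a line over `l`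
because `S` is a DVR; its `k`-dimension is therefore `[l : k]`.
-/

open IsLocalRing Module

namespace IsLocalRing

variable {S : Type*} [CommRing S] [IsLocalRing S]

abbrev residuePullback (k : Subfield (ResidueField S)) : Subring S :=
  k.toSubring.comap (residue S)

variable {k : Subfield (ResidueField S)}

theorem mem_residuePullback {x : S} : x ∈ residuePullback k ↔ residue S x ∈ k := Iff.rfl

theorem mem_residuePullback_of_mem_maximalIdeal {x : S} (hx : x ∈ maximalIdeal S) :
    x ∈ residuePullback k := by
  rw [mem_residuePullback, (residue_eq_zero_iff x).mpr hx]
  exact zero_mem k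

instance : IsLocalHom (residuePullback k).subtype where
  map_nonunit x hx := by
    obtain ⟨u, hu⟩ := hx
    have hinv : (↑u⁻¹ : S) ∈ residuePullback k := by
      rw [mem_residuePullback, map_units_inv, hu]
      exact inv_mem x.2
    have hxu : (x : S) = u := hu.symm
    exact IsUnit.of_mul_eq_one (a := x) ⟨_, hinv⟩ (Subtype.ext (by simp [hxu]))

instance : IsLocalRing (residuePullback k) :=
  .of_isUnit_or_isUnit_one_sub_self fun a ↦
    (isUnit_or_isUnit_one_sub_self (a : S)).imp (isUnit_of_map_unit (residuePullback k).subtype a)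
      fun h ↦ isUnit_of_map_unit (residuePullback k).subtype (1 - a) (by simpa using h)

theorem mem_maximalIdeal_residuePullback {x : residuePullback k} :
    x ∈ maximalIdeal (residuePullback k) ↔ (x : S) ∈ maximalIdeal S := by
  rw [mem_maximalIdeal, mem_maximalIdeal, mem_nonunits_iff, mem_nonunits_iff,
    ← isUnit_map_iff (residuePullback k).subtype x]
  rfl

variable (k) in
noncomputable def residuePullback.residue : residuePullback k →+* k :=
  (IsLocalRing.residue S).restrict (residuePullback k) k fun _ h ↦ h

theorem residuePullback.residue_surjective :
    Function.Surjective (residuePullback.residue k) := by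
  rintro ⟨y, hy⟩
  obtain ⟨x, rfl⟩ := IsLocalRing.residue_surjective y
  exact ⟨⟨x, hy⟩, rfl⟩

theorem residuePullback.ker_residue :
    RingHom.ker (residuePullback.residue k) = maximalIdeal (residuePullback k) := by
  ext x
  rw [RingHom.mem_ker, mem_maximalIdeal_residuePullback, ← residue_eq_zero_iff,
    ← Subtype.val_inj]
  rfl

variable (k) in
noncomputable def residuePullback.quotientMaximalIdealEquiv :
    residuePullback k ⧸ maximalIdeal (residuePullback k) ≃+* k :=
  (Ideal.quotEquivOfEq residuePullback.ker_residue.symm).trans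
    (RingHom.quotientKerEquivOfSurjective residuePullback.residue_surjective)

theorem residuePullback.comap_subtype_maximalIdeal :
    (maximalIdeal S).comap (residuePullback k).subtype = maximalIdeal (residuePullback k) :=
  Ideal.ext fun _ ↦ mem_maximalIdeal_residuePullback.symm

theorem residuePullback.coe_mem_maximalIdeal_sq_iff {x : residuePullback k} :
    (x : S) ∈ maximalIdeal S ^ 2 ↔ x ∈ maximalIdeal (residuePullback k) ^ 2 := by
  refine ⟨fun hx ↦ ?_, fun hx ↦ ?_⟩
  · rw [pow_two] at hx
    refine Submodule.mul_induction_on' (C := fun y hy ↦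
      (⟨y, mem_residuePullback_of_mem_maximalIdeal (Ideal.mul_le_right hy)⟩ :
        residuePullback k) ∈ maximalIdeal (residuePullback k) ^ 2)
      (fun a ha b hb ↦ ?_) (fun _ _ _ _ ↦ add_mem) hx
    rw [pow_two]
    exact Ideal.mul_mem_mul
      (r := (⟨a, mem_residuePullback_of_mem_maximalIdeal ha⟩ : residuePullback k))
      (s := (⟨b, mem_residuePullback_of_mem_maximalIdeal hb⟩ : residuePullback k))
      (mem_maximalIdeal_residuePullback.mpr ha) (mem_maximalIdeal_residuePullback.mpr hb)
  · rw [← residuePullback.comap_subtype_maximalIdeal] at hx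
    exact Ideal.le_comap_pow _ 2 hx

theorem residuePullback.maximalIdeal_le_comap :
    maximalIdeal (residuePullback k) ≤
      (maximalIdeal S).comap (Algebra.ofId (residuePullback k) S) :=
  fun _ ↦ mem_maximalIdeal_residuePullback.mp

variable (k) in
noncomputable def residuePullback.cotangentEquiv :
    (maximalIdeal (residuePullback k)).Cotangent ≃ₗ[residuePullback k] CotangentSpace S :=
  .ofBijective (Ideal.mapCotangent _ _ _ residuePullback.maximalIdeal_le_comap) <| by
    refine ⟨(injective_iff_map_eq_zero _).mpr fun m hm ↦ ?_, fun m ↦ ?_⟩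
    · obtain ⟨x, rfl⟩ := Ideal.toCotangent_surjective _ m
      rw [Ideal.mapCotangent_toCotangent, Ideal.toCotangent_eq_zero] at hm
      exact (Ideal.toCotangent_eq_zero _ x).mpr (coe_mem_maximalIdeal_sq_iff.mp hm)
    · obtain ⟨x, rfl⟩ := Ideal.toCotangent_surjective _ m
      exact ⟨(maximalIdeal _).toCotangent ⟨⟨x, mem_residuePullback_of_mem_maximalIdeal x.2⟩,
        mem_maximalIdeal_residuePullback.mpr x.2⟩, rfl⟩

theorem residuePullback.rank_cotangent :
    Module.rank (residuePullback k ⧸ maximalIdeal (residuePullback k))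
      (maximalIdeal (residuePullback k)).Cotangent = Module.rank k (CotangentSpace S) := by
  refine rank_eq_of_equiv_equiv (residuePullback.quotientMaximalIdealEquiv k)
    (residuePullback.cotangentEquiv k).toAddEquiv (RingEquiv.bijective _) ?_
  rintro ⟨r⟩ m
  show residuePullback.cotangentEquiv k (r • m) = _
  rw [map_smul]
  -- `r` acts on `𝔪_S/𝔪_S²` through `S`, hence through its residue in `k`.
  rfl

end IsLocalRing

theorem IsDiscreteValuationRing.finrank_cotangentSpace {S : Type*} [CommRing S] [IsDomain S]
    [IsDiscreteValuationRing S] (k : Subfield (ResidueField S)) :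
    finrank k (CotangentSpace S) = finrank k (ResidueField S) := by
  rw [← finrank_mul_finrank k (ResidueField S), finrank_CotangentSpace_eq_one_iff.mpr ‹_›,
    mul_one]

/-- Let `S` be a DVR with residue field `l`, `k` a subfield of `l` with `[l : k] = d`,
`q : S → l` the quotient map, and `R = q⁻¹(k)`.  Then `R` is local, its maximal ideal `𝔪`
is (the preimage in `R` of) the maximal ideal of `S`, `R/𝔪 ≅ k`, and `dim_k 𝔪/𝔪² = d`. -/
theorem pullback_of_dvr_residue_subfield (S : Type*) [CommRing S] [IsDomain S]
    [IsDiscreteValuationRing S] (k : Subfield (IsLocalRing.ResidueField S)) (d : ℕ)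
    (hd : Module.finrank k (IsLocalRing.ResidueField S) = d)
    (R : Subring S)
    (hR : R = Subring.comap (IsLocalRing.residue S) k.toSubring)
    (𝔪 : Ideal R)
    (h𝔪 : ∀ x : R, x ∈ 𝔪 ↔ (x : S) ∈ IsLocalRing.maximalIdeal S) :
    IsLocalRing R ∧ 𝔪.IsMaximal ∧ (∀ I : Ideal R, I ≠ ⊤ → I ≤ 𝔪) ∧
      Nonempty ((R ⧸ 𝔪) ≃+* k) ∧
      Module.finrank (R ⧸ 𝔪) 𝔪.Cotangent = d := by
  subst hR
  obtain rfl : 𝔪 = maximalIdeal (residuePullback k) :=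
    Ideal.ext fun x ↦ (h𝔪 x).trans mem_maximalIdeal_residuePullback.symm
  refine ⟨inferInstance, maximalIdeal.isMaximal _, fun _ ↦ le_maximalIdeal,
    ⟨residuePullback.quotientMaximalIdealEquiv k⟩, ?_⟩
  rw [← hd, ← IsDiscreteValuationRing.finrank_cotangentSpace k]
  exact congrArg Cardinal.toNat residuePullback.rank_cotangent
end
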